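/- For the Kerr–Newman–NUT–AdS metric, set β(r,θ) = Σ/Δ_θ and λ(r,θ) = Σ/Δ_r, and let 𝒢(r,θ) = [[g_tt, g_tφ],[g_tφ, g_φφ]] be the Gram matrix of ∂_t, ∂_φ, assumed invertible on U. Then on the open subset of U where additionally r ≠ 0: (a) the compatibility condition ∂_θ(λ · ∂_r ln β) = 0 holds — indeed λ · ∂_r ln β = 2r/Δ_r; (b) the integrability condition ∂_θ( (𝒢⁻¹)^{ab} + (∂_r ln β)⁻¹ · ∂_r(𝒢⁻¹)^{ab} ) = 0 holds for all a, b ∈ {t, φ}. -/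

import Mathlib

open Real

noncomputable section

namespace KNNAdS

variable (M N a C Λ β₀ : ℝ)

def k : ℝ := (1 - Λ*N^2) * (a^2 - N^2)
def Δθ (θ : ℝ) : ℝ := 1 + (4*a*N*Λ/3) * Real.cos θ + (a^2*Λ/3) * (Real.cos θ)^2
def Δr (r : ℝ) : ℝ :=
  (k N a Λ + β₀) - 2*M*r
    + (k N a Λ / (a^2 - N^2) - (a^2 + 3*N^2)*Λ/3) * r^2 - (Λ/3) * r^4
def Sig (r θ : ℝ) : ℝ := r^2 + (N + a * Real.cos θ)^2
def χ (θ : ℝ) : ℝ := a * (Real.sin θ)^2 - 2*N*(Real.cos θ + C)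

def g_tt (r θ : ℝ) : ℝ :=
  -(Δr M N a Λ β₀ r - a^2 * Δθ N a Λ θ * (Real.sin θ)^2) / Sig N a r θ
def g_tφ (r θ : ℝ) : ℝ :=
  (Δr M N a Λ β₀ r * χ N a C θ
    - a * (Sig N a r θ + a * χ N a C θ) * Δθ N a Λ θ * (Real.sin θ)^2)
    / Sig N a r θ
def g_φφ (r θ : ℝ) : ℝ :=
  ((Sig N a r θ + a * χ N a C θ)^2 * Δθ N a Λ θ * (Real.sin θ)^2
    - Δr M N a Λ β₀ r * (χ N a C θ)^2) / Sig N a r θ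

/-- The Gram matrix `𝒢 = [[g_tt, g_tφ],[g_tφ, g_φφ]]` of the Killing vectors
`∂_t, ∂_φ` of the Kerr–Newman–NUT–AdS metric. -/
def Gram (r θ : ℝ) : Matrix (Fin 2) (Fin 2) ℝ :=
  Matrix.of
    ![![g_tt M N a Λ β₀ r θ, g_tφ M N a C Λ β₀ r θ],
      ![g_tφ M N a C Λ β₀ r θ, g_φφ M N a C Λ β₀ r θ]]

/-- `β = Σ/Δ_θ`, the `θθ`-coefficient of the metric. -/
def β (r θ : ℝ) : ℝ := Sig N a r θ / Δθ N a Λ θ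

/-- `λ = Σ/Δ_r`, the `rr`-coefficient of the metric. -/
def lam (r θ : ℝ) : ℝ := Sig N a r θ / Δr M N a Λ β₀ r

end KNNAdS

namespace KNNAdSProof

open KNNAdS

lemma exists_hasDerivAt_Δr (M N a C Λ β₀ r : ℝ) :
    ∃ D, HasDerivAt (fun r' => Δr M N a Λ β₀ r') D r := by
  have h2 : HasDerivAt (fun x : ℝ => x^2) (2*r) r := by simpa using hasDerivAt_pow 2 r
  have h4 : HasDerivAt (fun x : ℝ => x^4) (4*r^3) r := by simpa using hasDerivAt_pow 4 r
  exact ⟨_, (((hasDerivAt_const r (KNNAdS.k N a Λ + β₀)).sub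
      ((hasDerivAt_id r).const_mul (2*M))).add
      (h2.const_mul (KNNAdS.k N a Λ / (a^2 - N^2) - (a^2 + 3*N^2)*Λ/3))).sub
      (h4.const_mul (Λ/3))⟩

lemma deriv_log_β (N a Λ r θ : ℝ) (hd : Δθ N a Λ θ ≠ 0) (hS : Sig N a r θ ≠ 0) :
    deriv (fun r' => Real.log (β N a Λ r' θ)) r = 2*r / Sig N a r θ := by
  have h2 : HasDerivAt (fun x : ℝ => x^2) (2*r) r := by simpa using hasDerivAt_pow 2 r
  have hb : HasDerivAt (fun r' => KNNAdS.β N a Λ r' θ) (2*r / Δθ N a Λ θ) r := by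
    unfold KNNAdS.β KNNAdS.Sig
    exact (h2.add_const _).div_const _
  have hβ0 : KNNAdS.β N a Λ r θ ≠ 0 := div_ne_zero hS hd
  rw [(hb.log hβ0).deriv]
  unfold KNNAdS.β KNNAdS.Sig at *
  field_simp

lemma gram_inv (M N a C Λ β₀ : ℝ) (haN : a^2 ≠ N^2) (r θ : ℝ)
    (hr : Δr M N a Λ β₀ r ≠ 0) (hd : Δθ N a Λ θ ≠ 0) (hS : Sig N a r θ ≠ 0)
    (hs : Real.sin θ ≠ 0) :
    (Gram M N a C Λ β₀ r θ)⁻¹ = Matrix.of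
      ![![(-(r^2 + (N^2 + a^2 - 2*a*N*C))^2 / Δr M N a Λ β₀ r
            + (χ N a C θ)^2 / (Δθ N a Λ θ * Real.sin θ^2)) / Sig N a r θ,
          (-(a*(r^2 + (N^2 + a^2 - 2*a*N*C))) / Δr M N a Λ β₀ r
            + χ N a C θ / (Δθ N a Λ θ * Real.sin θ^2)) / Sig N a r θ],
        ![(-(a*(r^2 + (N^2 + a^2 - 2*a*N*C))) / Δr M N a Λ β₀ r
            + χ N a C θ / (Δθ N a Λ θ * Real.sin θ^2)) / Sig N a r θ,
          (-(a^2) / Δr M N a Λ β₀ r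
            + 1 / (Δθ N a Λ θ * Real.sin θ^2)) / Sig N a r θ]] := by
  apply Matrix.inv_eq_right_inv
  have hsc : Real.sin θ ^ 2 = 1 - Real.cos θ ^ 2 := Real.sin_sq θ
  have h1c : 1 - Real.cos θ ^ 2 ≠ 0 := by rw [← hsc]; exact pow_ne_zero 2 hs
  have haN' : a^2 - N^2 ≠ 0 := sub_ne_zero.mpr haN
  have hS' : r^2 + (N + a * Real.cos θ)^2 ≠ 0 := hS
  ext i j
  fin_cases i <;> fin_cases j <;>
    simp only [KNNAdS.Gram, Matrix.mul_apply, Fin.sum_univ_two, Matrix.of_apply,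
      Matrix.cons_val', Matrix.cons_val_zero, Matrix.cons_val_one, Matrix.head_cons,
      Matrix.head_fin_const, Matrix.empty_val', Matrix.cons_val_fin_one,
      Matrix.one_apply_eq, Matrix.one_apply_ne, KNNAdS.g_tt, KNNAdS.g_tφ, KNNAdS.g_φφ,
      KNNAdS.Sig, KNNAdS.χ, ne_eq, Fin.mk_one, Fin.zero_eta, Matrix.one_apply,
        Fin.isValue, zero_ne_one, one_ne_zero, if_false] <;>
    rw [hsc] <;>
    field_simp <;>
    ring

lemma aux_entry (M N a C Λ β₀ : ℝ) (r θ : ℝ)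
    (hr : Δr M N a Λ β₀ r ≠ 0) (hd : Δθ N a Λ θ ≠ 0) (hS : Sig N a r θ ≠ 0)
    (hs : Real.sin θ ≠ 0) (hr0 : r ≠ 0) (i j : Fin 2)
    (u : ℝ → ℝ) (u' : ℝ) (hu : HasDerivAt u u' r) (w : ℝ → ℝ)
    (hgram : ∀ r' θ'', Δr M N a Λ β₀ r' ≠ 0 → Δθ N a Λ θ'' ≠ 0 →
        Sig N a r' θ'' ≠ 0 → Real.sin θ'' ≠ 0 →
        (Gram M N a C Λ β₀ r' θ'')⁻¹ i j
          = (u r' / Δr M N a Λ β₀ r' + w θ'') / Sig N a r' θ'') :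
    deriv (fun θ' => (Gram M N a C Λ β₀ r θ')⁻¹ i j
        + (deriv (fun r' => Real.log (β N a Λ r' θ')) r)⁻¹
          * deriv (fun r' => (Gram M N a C Λ β₀ r' θ')⁻¹ i j) r) θ = 0 := by
  obtain ⟨D, hD⟩ := exists_hasDerivAt_Δr M N a C Λ β₀ r
  have cΔθ : Continuous (fun θ' => Δθ N a Λ θ') := by unfold KNNAdS.Δθ; fun_prop
  have cSig : Continuous (fun θ' => Sig N a r θ') := by unfold KNNAdS.Sig; fun_prop
  have key : (fun θ' => (Gram M N a C Λ β₀ r θ')⁻¹ i j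
        + (deriv (fun r' => Real.log (β N a Λ r' θ')) r)⁻¹
          * deriv (fun r' => (Gram M N a C Λ β₀ r' θ')⁻¹ i j) r)
      =ᶠ[nhds θ] fun _ => (u' * Δr M N a Λ β₀ r - u r * D) / (2*r*(Δr M N a Λ β₀ r)^2) := by
    filter_upwards [cΔθ.continuousAt.eventually_ne hd, cSig.continuousAt.eventually_ne hS,
      Real.continuous_sin.continuousAt.eventually_ne hs] with θ' hd' hS' hs'
    have hlog := deriv_log_β N a Λ r θ' hd' hS'
    have cΔr : Continuous (fun r' => Δr M N a Λ β₀ r') := by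
      unfold KNNAdS.Δr; fun_prop
    have cSr : Continuous (fun r' => Sig N a r' θ') := by unfold KNNAdS.Sig; fun_prop
    have heq : (fun r' => (Gram M N a C Λ β₀ r' θ')⁻¹ i j)
        =ᶠ[nhds r] fun r' => (u r' / Δr M N a Λ β₀ r' + w θ') / Sig N a r' θ' := by
      filter_upwards [cΔr.continuousAt.eventually_ne hr, cSr.continuousAt.eventually_ne hS']
        with r' h1 h2
      exact hgram r' θ' h1 hd' h2 hs'
    have h2r : HasDerivAt (fun x : ℝ => x^2) (2*r) r := by simpa using hasDerivAt_pow 2 r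
    have hS2 : HasDerivAt (fun r' => Sig N a r' θ') (2*r) r := by
      unfold KNNAdS.Sig; exact h2r.add_const _
    have hE : HasDerivAt (fun r' => (u r' / Δr M N a Λ β₀ r' + w θ') / Sig N a r' θ')
        (((u' * Δr M N a Λ β₀ r - u r * D) / (Δr M N a Λ β₀ r)^2 * Sig N a r θ'
          - (u r / Δr M N a Λ β₀ r + w θ') * (2*r)) / (Sig N a r θ')^2) r :=
      ((hu.div hD hr).add_const _).div hS2 hS'
    rw [hlog, heq.deriv_eq, hE.deriv, hgram r θ' hr hd' hS' hs']
    field_simp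
    ring
  rw [key.deriv_eq, deriv_const]

lemma gram_entry (M N a C Λ β₀ : ℝ) (haN : a^2 ≠ N^2) (r' θ'' : ℝ)
    (h1 : Δr M N a Λ β₀ r' ≠ 0) (h2 : Δθ N a Λ θ'' ≠ 0) (h3 : Sig N a r' θ'' ≠ 0)
    (h4 : Real.sin θ'' ≠ 0) : ∀ i j : Fin 2,
    (Gram M N a C Λ β₀ r' θ'')⁻¹ i j
      = ((if i = 0 then (if j = 0 then -(r'^2 + (N^2 + a^2 - 2*a*N*C))^2
            else -(a*(r'^2 + (N^2 + a^2 - 2*a*N*C))))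
          else (if j = 0 then -(a*(r'^2 + (N^2 + a^2 - 2*a*N*C))) else -(a^2)))
          / Δr M N a Λ β₀ r'
        + (if i = 0 then (if j = 0 then (χ N a C θ'')^2 else χ N a C θ'')
          else (if j = 0 then χ N a C θ'' else 1)) / (Δθ N a Λ θ'' * Real.sin θ''^2))
        / Sig N a r' θ'' := by
  rw [gram_inv M N a C Λ β₀ haN r' θ'' h1 h2 h3 h4]
  intro i j
  fin_cases i <;> fin_cases j <;> simp

end KNNAdSProof

/-- For the Kerr–Newman–NUT–AdS metric with `β = Σ/Δ_θ`,
`λ = Σ/Δ_r`, on the open subset of `U` where `r ≠ 0`: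
(a) the compatibility condition `∂_θ(λ·∂_r ln β) = 0` holds, and indeed
`λ·∂_r ln β = 2r/Δ_r`;
(b) the integrability condition
`∂_θ((𝒢⁻¹)^{ab} + (∂_r ln β)⁻¹·∂_r(𝒢⁻¹)^{ab}) = 0` holds for all `a,b ∈ {t,φ}`. -/
theorem kerr_newman_nut_ads_compatibility_and_integrability
    (M N a C Λ β₀ : ℝ) (haN : a^2 ≠ N^2) :
    ∀ r θ : ℝ,
      KNNAdS.Δr M N a Λ β₀ r ≠ 0 →
      KNNAdS.Δθ N a Λ θ ≠ 0 →
      KNNAdS.Sig N a r θ ≠ 0 →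
      Real.sin θ ≠ 0 →
      -- the Gram matrix is assumed invertible on U
      (KNNAdS.Gram M N a C Λ β₀ r θ).det ≠ 0 →
      r ≠ 0 →
      -- (a) compatibility
      (KNNAdS.lam M N a Λ β₀ r θ
            * deriv (fun r' => Real.log (KNNAdS.β N a Λ r' θ)) r
          = 2*r / KNNAdS.Δr M N a Λ β₀ r
        ∧ deriv (fun θ' =>
            KNNAdS.lam M N a Λ β₀ r θ'
              * deriv (fun r' => Real.log (KNNAdS.β N a Λ r' θ')) r) θ = 0)
      -- (b) integrability
      ∧ (∀ i j : Fin 2,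
          deriv (fun θ' =>
            (KNNAdS.Gram M N a C Λ β₀ r θ')⁻¹ i j
              + (deriv (fun r' => Real.log (KNNAdS.β N a Λ r' θ')) r)⁻¹
                * deriv (fun r' => (KNNAdS.Gram M N a C Λ β₀ r' θ')⁻¹ i j) r) θ
            = 0) := by
  intro r θ hr hd hS hs hdet hr0
  open KNNAdSProof KNNAdS in
  refine ⟨⟨?_, ?_⟩, ?_⟩
  · rw [deriv_log_β N a Λ r θ hd hS]
    unfold KNNAdS.lam
    field_simp
  · have cΔθ : Continuous (fun θ' => Δθ N a Λ θ') := by unfold KNNAdS.Δθ; fun_prop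
    have cSig : Continuous (fun θ' => Sig N a r θ') := by unfold KNNAdS.Sig; fun_prop
    have key : (fun θ' => KNNAdS.lam M N a Λ β₀ r θ'
          * deriv (fun r' => Real.log (KNNAdS.β N a Λ r' θ')) r)
        =ᶠ[nhds θ] fun _ => 2*r / Δr M N a Λ β₀ r := by
      filter_upwards [cΔθ.continuousAt.eventually_ne hd, cSig.continuousAt.eventually_ne hS]
        with θ' hd' hS'
      rw [deriv_log_β N a Λ r θ' hd' hS']
      unfold KNNAdS.lam
      field_simp
    rw [key.deriv_eq, deriv_const]
  · intro i j
    have h2r : HasDerivAt (fun x : ℝ => x^2) (2*r) r := by simpa using hasDerivAt_pow 2 r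
    fin_cases i <;> fin_cases j
    · exact aux_entry M N a C Λ β₀ r θ hr hd hS hs hr0 _ _ _ _
        (((h2r.add_const (N^2 + a^2 - 2*a*N*C)).pow 2).neg) _
        (fun r' θ'' h1 h2 h3 h4 => by
          simpa using gram_entry M N a C Λ β₀ haN r' θ'' h1 h2 h3 h4 0 0)
    · exact aux_entry M N a C Λ β₀ r θ hr hd hS hs hr0 _ _ _ _
        (((h2r.add_const (N^2 + a^2 - 2*a*N*C)).const_mul a).neg) _
        (fun r' θ'' h1 h2 h3 h4 => by
          simpa using gram_entry M N a C Λ β₀ haN r' θ'' h1 h2 h3 h4 0 1)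
    · exact aux_entry M N a C Λ β₀ r θ hr hd hS hs hr0 _ _ _ _
        (((h2r.add_const (N^2 + a^2 - 2*a*N*C)).const_mul a).neg) _
        (fun r' θ'' h1 h2 h3 h4 => by
          simpa using gram_entry M N a C Λ β₀ haN r' θ'' h1 h2 h3 h4 1 0)
    · exact aux_entry M N a C Λ β₀ r θ hr hd hS hs hr0 _ _ _ _
        (hasDerivAt_const r (-(a^2))) _
        (fun r' θ'' h1 h2 h3 h4 => by
          simpa using gram_entry M N a C Λ β₀ haN r' θ'' h1 h2 h3 h4 1 1)
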